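/- arXiv:cs/0111038 — 2 statements merged into one kernel-verified Lean document; each statement's English description precedes it below -/
import Mathlib

section
/- In a fair valuation structure, for all valuations α and β, either (α ⊕ β) ⊖ β = α, or (α ⊕ β) ⊖ β = (α ⊕ β) ⊖ (α ⊕ β), which is an absorbing element strictly greater than α. -/
structure FairVS (E : Type*) [LinearOrder E] where
  op : E → E → E
  bot : E
  top : E
  bot_le : ∀ a : E, bot ≤ a
  le_top : ∀ a : E, a ≤ top
  comm : ∀ a b : E, op a b = op b a
  assoc : ∀ a b c : E, op (op a b) c = op a (op b c)
  iden : ∀ a : E, op a bot = a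
  mono : ∀ a b c : E, b ≤ a → op b c ≤ op a c
  absorb : ∀ a : E, op a top = top
  sub : E → E → E
  sub_add : ∀ a b : E, a ≤ b → op (sub b a) a = b
  sub_max : ∀ a b g : E, a ≤ b → op g a = b → g ≤ sub b a

/-!
Put `γ = α ⊕ β` and `δ = γ ⊖ β`; maximality of the difference gives `α ≤ δ`. If `α < δ`, let
`x = δ ⊖ α`. Maximality of `δ` forces `x ⊕ δ = δ`, and then maximality of `x` forces `x ⊕ x = x`.
An idempotent element absorbs everything above it, so `x < α` would give `δ = x ⊕ α = α`;
hence `α ≤ x`, so `δ = x ⊕ α` is squeezed between `x` and `x ⊕ x = x`, i.e. `δ = x` is idempotent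
and absorbs `α`. Then `δ ⊕ γ = γ`, and `δ` is the largest element absorbed by `γ`, namely `γ ⊖ γ`.
-/

namespace FairVS

variable {E : Type*} [LinearOrder E] (S : FairVS E)

lemma le_op_left (a b : E) : a ≤ S.op b a := by
  simpa only [S.comm S.bot a, S.iden] using S.mono b S.bot a (S.bot_le b)

lemma le_op_right (a b : E) : a ≤ S.op a b :=
  S.comm b a ▸ S.le_op_left a b

lemma op_eq_right_of_idem_of_le {x a : E} (hx : S.op x x = x) (hxa : x ≤ a) :
    S.op x a = a := by
  rw [← S.sub_add x a hxa, S.comm, S.assoc, hx]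

section Difference

variable {S} {a b c : E} (hab : a ≤ b) (hc : S.op c a = b)
include hab hc

lemma op_sub_sub_sub : S.op (S.sub (S.sub b a) c) (S.sub b a) = S.sub b a := by
  have hcd : c ≤ S.sub b a := S.sub_max a b c hab hc
  refine le_antisymm (S.sub_max a b _ hab ?_) (S.le_op_left _ _)
  calc S.op (S.op (S.sub (S.sub b a) c) (S.sub b a)) a
      = S.op (S.sub (S.sub b a) c) (S.op c a) := by rw [S.assoc, S.sub_add a b hab, hc]
    _ = b := by rw [← S.assoc, S.sub_add c _ hcd, S.sub_add a b hab]

lemma op_sub_sub_self :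
    S.op (S.sub (S.sub b a) c) (S.sub (S.sub b a) c) = S.sub (S.sub b a) c := by
  have hcd : c ≤ S.sub b a := S.sub_max a b c hab hc
  refine le_antisymm (S.sub_max c _ _ hcd ?_) (S.le_op_left _ _)
  rw [S.assoc, S.sub_add c _ hcd, op_sub_sub_sub hab hc]

lemma sub_sub_eq_of_lt (hlt : c < S.sub b a) : S.sub (S.sub b a) c = S.sub b a := by
  set x := S.sub (S.sub b a) c
  have hx : S.op x c = S.sub b a := S.sub_add c _ hlt.le
  have hxx : S.op x x = x := op_sub_sub_self hab hc
  have hcx : c ≤ x := by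
    by_contra! hxc
    rw [S.op_eq_right_of_idem_of_le hxx hxc.le] at hx
    exact hlt.ne hx
  refine le_antisymm (S.le_op_right x c |>.trans_eq hx) ?_
  calc S.sub b a = S.op x c := hx.symm
    _ ≤ S.op x x := by rw [S.comm x c, S.comm x x]; exact S.mono x c x hcx
    _ = x := hxx

lemma op_sub_self_of_lt (hlt : c < S.sub b a) : S.op (S.sub b a) (S.sub b a) = S.sub b a := by
  have h := op_sub_sub_self hab hc
  rwa [sub_sub_eq_of_lt hab hc hlt] at h

lemma op_sub_left_of_lt (hlt : c < S.sub b a) : S.op (S.sub b a) c = S.sub b a := by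
  have h := S.sub_add c _ hlt.le
  rwa [sub_sub_eq_of_lt hab hc hlt] at h

lemma sub_self_eq_of_op_sub_left (hdc : S.op (S.sub b a) c = S.sub b a) :
    S.sub b b = S.sub b a := by
  have hdb : S.op (S.sub b a) b = b := by
    calc S.op (S.sub b a) b = S.op (S.op (S.sub b a) c) a := by rw [S.assoc, hc]
      _ = b := by rw [hdc, S.sub_add a b hab]
  refine le_antisymm ?_ (S.sub_max b b _ le_rfl hdb)
  have hec : S.op (S.op (S.sub b b) c) a = b := by
    rw [S.assoc, hc, S.sub_add b b le_rfl]
  exact (S.le_op_right _ c).trans (S.sub_max a b _ hab hec)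

end Difference

end FairVS

theorem stmt8 {E : Type*} [LinearOrder E] (S : FairVS E) (α β : E) :
    S.sub (S.op α β) β = α ∨
    (S.sub (S.op α β) β = S.sub (S.op α β) (S.op α β) ∧
      S.op (S.sub (S.op α β) (S.op α β)) (S.sub (S.op α β) (S.op α β)) =
        S.sub (S.op α β) (S.op α β) ∧
      α < S.sub (S.op α β) (S.op α β)) := by
  have hβ : β ≤ S.op α β := S.le_op_left β α
  rcases (S.sub_max β _ α hβ rfl).eq_or_lt with heq | hlt
  · exact Or.inl heq.symm
  · have hself := FairVS.sub_self_eq_of_op_sub_left hβ rfl (FairVS.op_sub_left_of_lt hβ rfl hlt)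
    rw [hself]
    exact Or.inr ⟨rfl, FairVS.op_sub_self_of_lt hβ rfl hlt, hlt⟩
end

section
/- In a strictly monotonic fair valuation structure, for any tuple valuation α and context valuation β: if β ≺ ⊤ then (α ⊕ β) ⊖ β = α; consequently in a strictly monotonic VCSP, condition c_P(t) = (c_P(t) ⊕ β) ⊖ β where β is the combination of unary costs of t can only fail when β = ⊤, i.e., when some unary cost of t equals ⊤ and c_P(t) ≠ ⊤. -/
/-! Strict monotonicity makes `· ⊕ γ` injective for `γ ≠ ⊤`. Since `(α ⊕ β) ⊖ β` and `α` both
give `α ⊕ β` when combined with `β`, they coincide whenever `β ≠ ⊤`. If `β = ⊤`, the difference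
is `⊤ ⊖ ⊤ = ⊤`, which equals `α` only when `α = ⊤`. -/

namespace FairVS

variable {E : Type*} [LinearOrder E] (S : FairVS E)

def StrictlyMonotonic : Prop :=
  ∀ α β γ : E, β < α → γ ≠ S.top → S.op β γ < S.op α γ

theorem le_op_self (a b : E) : b ≤ S.op a b := by
  simpa only [S.comm S.bot b, S.iden b] using S.mono a S.bot b (S.bot_le a)

theorem op_sub_op_self (a b : E) : S.op (S.sub (S.op a b) b) b = S.op a b :=
  S.sub_add b _ (S.le_op_self a b)

theorem sub_top_top : S.sub S.top S.top = S.top :=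
  le_antisymm (S.le_top _) (S.sub_max _ _ _ le_rfl (S.absorb S.top))

variable {S}

theorem StrictlyMonotonic.op_right_cancel (hS : S.StrictlyMonotonic) {a b c : E}
    (hc : c ≠ S.top) (h : S.op a c = S.op b c) : a = b := by
  rcases lt_trichotomy a b with hlt | heq | hgt
  · exact absurd h (hS _ _ _ hlt hc).ne
  · exact heq
  · exact absurd h (hS _ _ _ hgt hc).ne'

theorem StrictlyMonotonic.sub_op_self (hS : S.StrictlyMonotonic) {b : E} (hb : b ≠ S.top)
    (a : E) : S.sub (S.op a b) b = a :=
  hS.op_right_cancel hb (S.op_sub_op_self a b)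

end FairVS

theorem stmt19 {E : Type*} [LinearOrder E] (S : FairVS E)
    (hsm : ∀ α β γ : E, β < α → γ ≠ S.top → S.op β γ < S.op α γ) :
    ∀ α β : E,
      (β < S.top → S.sub (S.op α β) β = α) ∧
      (S.sub (S.op α β) β ≠ α → β = S.top ∧ α ≠ S.top) := by
  intro α β
  have hcancel : β < S.top → S.sub (S.op α β) β = α :=
    fun hβ => FairVS.StrictlyMonotonic.sub_op_self hsm hβ.ne α
  refine ⟨hcancel, fun hne => ?_⟩
  have hβ : β = S.top := (S.le_top β).eq_or_lt.resolve_right (mt hcancel hne)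
  refine ⟨hβ, fun hα => hne ?_⟩
  subst hβ hα
  rw [S.absorb, S.sub_top_top]
end
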